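/- Let Q be a bounded, positive, self-adjoint operator on a complex Hilbert space H, let γ > 0 and T a positive even integer with γ‖Q‖ < 1/4, let α ∈ [0, 1/2] and β ≥ 0. There exists a constant c < ∞, depending only on α and β, such that for every R > 0 and every h ∈ H with ‖h‖_H ≤ R: ‖Q^{α} R̄_T(Q) Q^{β} h‖_H ≤ c R (γT)^{−(α+β)}. (This is Proposition C.8, part 1: with Q = T_s and β = (r − s)/(2(a + s)), u = Q^{β} h is L^s f_H under the source condition f_H = L^{−s} T_s^{β} h of the preconditioning setting, and R̄_T(Q) u = L^s(f_H − g̃_T).) -/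

import Mathlib

/-- Fractional power `A^r` (for `r : ℝ`) of a bounded operator, via the continuous
functional calculus for self-adjoint operators (real power `x ↦ x ^ r`). -/
noncomputable def opPow {H : Type*} [NormedAddCommGroup H] [InnerProductSpace ℂ H]
    [CompleteSpace H] (A : H →L[ℂ] H) (r : ℝ) : H →L[ℂ] H :=
  cfc (fun x : ℝ => x ^ r) A

/-- The tail-averaged gradient-descent filter operator
`Ḡ_T(Q) = (2/T) ∑_{t=T/2+1}^{T} γ ∑_{k=0}^{t-1} (I - γQ)^k`. -/
noncomputable def Gbar {H : Type*} [NormedAddCommGroup H] [InnerProductSpace ℂ H]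
    [CompleteSpace H] (γ : ℝ) (T : ℕ) (Q : H →L[ℂ] H) : H →L[ℂ] H :=
  (2 / (T : ℂ)) • ∑ t ∈ Finset.Ioc (T / 2) T,
    (γ : ℂ) • ∑ k ∈ Finset.range t, (1 - (γ : ℂ) • Q) ^ k

/-- The tail-averaged gradient-descent residual operator
`R̄_T(Q) = (2/T) ∑_{t=T/2+1}^{T} (I - γQ)^t`. -/
noncomputable def Rbar {H : Type*} [NormedAddCommGroup H] [InnerProductSpace ℂ H]
    [CompleteSpace H] (γ : ℝ) (T : ℕ) (Q : H →L[ℂ] H) : H →L[ℂ] H :=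
  (2 / (T : ℂ)) • ∑ t ∈ Finset.Ioc (T / 2) T, (1 - (γ : ℂ) • Q) ^ t

/-!
All operators involved are functions of `Q`, so by the continuous functional calculus the norm of
`Q^α R̄_T(Q) Q^β` is at most the supremum of `x^(α+β) r(x)` over the spectrum `⊆ [0, ‖Q‖]`, where
`r(x) = (2/T) ∑_{T/2 < t ≤ T} (1 - γx)^t`. Every term has `t ≥ T/2`, so `r(x) ≤ exp(-γTx/2)`,
and the elementary bound `u^s e^{-u} ≤ s^s e^{-s}` at `u = γTx/2` gives
`x^s r(x) ≤ (2s)^s e^{-s} (γT)^{-s}` with `s = α + β`.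
-/

open Real Finset

theorem rpow_mul_exp_neg_le {s u : ℝ} (hs : 0 ≤ s) (hu : 0 ≤ u) :
    u ^ s * exp (-u) ≤ s ^ s * exp (-s) := by
  rcases hs.eq_or_lt with rfl | hs
  · simpa using hu
  have key : u * exp (-(u / s)) ≤ s * exp (-1) :=
    calc u * exp (-(u / s)) = s * (u / s * exp (-(u / s))) := by field_simp
      _ ≤ s * exp (-1) := by gcongr; exact mul_exp_neg_le_exp_neg_one _
  calc u ^ s * exp (-u) = (u * exp (-(u / s))) ^ s := by
        rw [mul_rpow hu (exp_pos _).le, ← exp_mul]; field_simp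
    _ ≤ (s * exp (-1)) ^ s := rpow_le_rpow (by positivity) key hs.le
    _ = s ^ s * exp (-s) := by rw [mul_rpow hs.le (exp_pos _).le, ← exp_mul]; ring_nf

theorem rpow_mul_exp_neg_mul_le {a s x : ℝ} (ha : 0 < a) (hs : 0 ≤ s) (hx : 0 ≤ x) :
    x ^ s * exp (-(a * x)) ≤ (s / a) ^ s * exp (-s) := by
  have h := rpow_mul_exp_neg_le hs (mul_nonneg ha.le hx)
  rw [mul_rpow ha.le hx] at h
  rw [div_rpow hs ha.le, div_mul_eq_mul_div, le_div_iff₀ (rpow_pos_of_pos ha s)]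
  linear_combination h

noncomputable def rbarFun (γ : ℝ) (T : ℕ) (x : ℝ) : ℝ :=
  2 / T * ∑ t ∈ Ioc (T / 2) T, (1 - γ * x) ^ t

theorem continuous_rbarFun (γ : ℝ) (T : ℕ) : Continuous (rbarFun γ T) := by
  unfold rbarFun
  fun_prop

theorem rbarFun_nonneg {γ x : ℝ} (T : ℕ) (hx : γ * x ≤ 1) : 0 ≤ rbarFun γ T x := by
  have : 0 ≤ 1 - γ * x := by linarith
  unfold rbarFun; positivity

theorem rbarFun_le_exp {γ x : ℝ} {T : ℕ} (hT : Even T) (hx₀ : 0 ≤ γ * x) (hx₁ : γ * x ≤ 1) :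
    rbarFun γ T x ≤ exp (-(γ * T / 2 * x)) := by
  obtain ⟨m, rfl⟩ := hT
  have hhalf : (m + m) / 2 = m := by omega
  have hterm : ∀ t ∈ Ioc m (m + m), (1 - γ * x) ^ t ≤ exp (-(m * (γ * x))) := by
    intro t ht
    have hmt : (m : ℝ) ≤ t := by exact_mod_cast (mem_Ioc.mp ht).1.le
    calc (1 - γ * x) ^ t ≤ exp (-(γ * x)) ^ t :=
          pow_le_pow_left₀ (by linarith) (one_sub_le_exp_neg _) t
      _ = exp (-(t * (γ * x))) := by rw [← exp_nat_mul]; ring_nf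
      _ ≤ exp (-(m * (γ * x))) := by gcongr
  have hcard : #(Ioc m (m + m)) = m := by simp
  have hweight : 2 / ((m + m : ℕ) : ℝ) * m ≤ 1 := by
    rcases eq_or_ne m 0 with rfl | hm
    · simp
    · push_cast; field_simp; norm_num
  calc rbarFun γ (m + m) x ≤ 2 / ((m + m : ℕ) : ℝ) * (m * exp (-(m * (γ * x)))) := by
        unfold rbarFun
        rw [hhalf]
        gcongr
        simpa [hcard] using sum_le_card_nsmul _ _ _ hterm
    _ ≤ 1 * exp (-(m * (γ * x))) := by
        rw [← mul_assoc]; exact mul_le_mul_of_nonneg_right hweight (exp_pos _).le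
    _ = exp (-(γ * ↑(m + m) / 2 * x)) := by push_cast; ring_nf

theorem rpow_mul_rbarFun_le {s γ x : ℝ} {T : ℕ} (hs : 0 ≤ s) (hγ : 0 < γ) (hT₀ : 0 < T)
    (hT : Even T) (hx₀ : 0 ≤ x) (hx₁ : γ * x ≤ 1) :
    x ^ s * rbarFun γ T x ≤ (2 * s) ^ s * exp (-s) * (γ * T) ^ (-s) := by
  have hγT : 0 < γ * T := by positivity
  calc x ^ s * rbarFun γ T x ≤ x ^ s * exp (-(γ * T / 2 * x)) := by
        gcongr
        exact rbarFun_le_exp hT (by positivity) hx₁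
    _ ≤ (s / (γ * T / 2)) ^ s * exp (-s) := rpow_mul_exp_neg_mul_le (by positivity) hs hx₀
    _ = (2 * s) ^ s * exp (-s) * (γ * T) ^ (-s) := by
        rw [div_div_eq_mul_div, div_rpow (by positivity) hγT.le, rpow_neg hγT.le, mul_comm s]
        ring

section Operator

variable {H : Type*} [NormedAddCommGroup H] [InnerProductSpace ℂ H] [CompleteSpace H]

theorem Rbar_eq_cfc (γ : ℝ) (T : ℕ) {Q : H →L[ℂ] H} (hQ : IsSelfAdjoint Q) :
    Rbar γ T Q = cfc (rbarFun γ T) Q := by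
  have hstep : cfc (fun x : ℝ => 1 - γ * x) Q = 1 - (γ : ℂ) • Q := by
    rw [cfc_sub (fun _ => 1) (γ * ·) Q, cfc_const_one ℝ Q, cfc_const_mul_id γ Q, Complex.coe_smul]
  have hpow (t : ℕ) : cfc (fun x : ℝ => (1 - γ * x) ^ t) Q = (1 - (γ : ℂ) • Q) ^ t := by
    rw [cfc_pow (fun x : ℝ => 1 - γ * x) t Q, hstep]
  have hscalar : (2 / (T : ℂ)) = ((2 / T : ℝ) : ℂ) := by push_cast; rfl
  unfold rbarFun
  rw [cfc_const_mul _ _ Q, ← Finset.sum_fn, cfc_sum _ Q, Rbar, hscalar, Complex.coe_smul]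
  simp only [hpow]

theorem opPow_mul_Rbar_mul_opPow {α β : ℝ} (γ : ℝ) (T : ℕ) {Q : H →L[ℂ] H}
    (hQ : IsSelfAdjoint Q) (hα : 0 ≤ α) (hβ : 0 ≤ β) :
    opPow Q α * Rbar γ T Q * opPow Q β = cfc (fun x => x ^ α * rbarFun γ T x * x ^ β) Q := by
  have hα' := (continuous_rpow_const hα).continuousOn (s := spectrum ℝ Q)
  have hβ' := (continuous_rpow_const hβ).continuousOn (s := spectrum ℝ Q)
  have hR := (continuous_rbarFun γ T).continuousOn (s := spectrum ℝ Q)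
  rw [Rbar_eq_cfc γ T hQ, opPow, opPow, ← cfc_mul _ _ Q hα' hR]
  exact (cfc_mul _ _ Q (hα'.mul hR) hβ').symm

theorem norm_opPow_mul_Rbar_mul_opPow_le {α β γ : ℝ} {T : ℕ} {Q : H →L[ℂ] H}
    (hQ : Q.IsPositive) (hα : 0 ≤ α) (hβ : 0 ≤ β) (hγ : 0 < γ) (hT₀ : 0 < T) (hT : Even T)
    (hγQ : γ * ‖Q‖ ≤ 1) :
    ‖opPow Q α * Rbar γ T Q * opPow Q β‖ ≤
      (2 * (α + β)) ^ (α + β) * exp (-(α + β)) * (γ * T) ^ (-(α + β)) := by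
  have hs : 0 ≤ α + β := add_nonneg hα hβ
  rw [opPow_mul_Rbar_mul_opPow γ T hQ.isSelfAdjoint hα hβ]
  refine norm_cfc_le (by have := rpow_nonneg (mul_nonneg zero_le_two hs) (α + β); positivity)
    fun x hx => ?_
  have hx₀ : 0 ≤ x := spectrum_nonneg_of_nonneg ((Q.nonneg_iff_isPositive).mpr hQ) hx
  have hxQ : x ≤ ‖Q‖ :=
    calc x ≤ ‖x‖ := le_abs_self x
      _ ≤ ‖Q‖ * ‖(1 : H →L[ℂ] H)‖ := spectrum.norm_le_norm_mul_of_mem hx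
      _ ≤ ‖Q‖ := mul_le_of_le_one_right (norm_nonneg Q) ContinuousLinearMap.norm_id_le
  have hx₁ : γ * x ≤ 1 := (mul_le_mul_of_nonneg_left hxQ hγ.le).trans hγQ
  rw [mul_right_comm, ← rpow_add_of_nonneg hx₀ hα hβ, norm_of_nonneg
    (mul_nonneg (rpow_nonneg hx₀ _) (rbarFun_nonneg T hx₁))]
  exact rpow_mul_rbarFun_le hs hγ hT₀ hT hx₀ hx₁

end Operator

/-- Proposition C.8, part 1.
For a bounded positive self-adjoint operator `Q`, `γ > 0`, a positive even integer
`T` with `γ‖Q‖ < 1/4`, `α ∈ [0, 1/2]` and `β ≥ 0`, there is a constant `c`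
(depending only on `α` and `β`) such that for every `R > 0` and every `h` with
`‖h‖ ≤ R`: `‖Q^α R̄_T(Q) Q^β h‖ ≤ c R (γT)^{-(α+β)}`. -/
theorem source_condition_residual_bound
    {H : Type*} [NormedAddCommGroup H] [InnerProductSpace ℂ H] [CompleteSpace H]
    (α β : ℝ) (hα : α ∈ Set.Icc (0 : ℝ) (1 / 2)) (hβ : 0 ≤ β) :
    ∃ c : ℝ, ∀ Q : H →L[ℂ] H, Q.IsPositive →
      ∀ (γ : ℝ) (T : ℕ), 0 < γ → 0 < T → Even T → γ * ‖Q‖ < 1 / 4 →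
      ∀ (R : ℝ), 0 < R → ∀ h : H, ‖h‖ ≤ R →
        ‖opPow Q α (Rbar γ T Q (opPow Q β h))‖ ≤
          c * R * (γ * (T : ℝ)) ^ (-(α + β)) := by
  refine ⟨(2 * (α + β)) ^ (α + β) * exp (-(α + β)), fun Q hQ γ T hγ hT₀ hT hγQ R _ h hh => ?_⟩
  have hop := norm_opPow_mul_Rbar_mul_opPow_le hQ hα.1 hβ hγ hT₀ hT (by linarith)
  calc ‖opPow Q α (Rbar γ T Q (opPow Q β h))‖ = ‖(opPow Q α * Rbar γ T Q * opPow Q β) h‖ := rfl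
    _ ≤ ‖opPow Q α * Rbar γ T Q * opPow Q β‖ * ‖h‖ := ContinuousLinearMap.le_opNorm _ _
    _ ≤ (2 * (α + β)) ^ (α + β) * exp (-(α + β)) * (γ * T) ^ (-(α + β)) * R :=
        mul_le_mul hop hh (norm_nonneg h) ((norm_nonneg _).trans hop)
    _ = (2 * (α + β)) ^ (α + β) * exp (-(α + β)) * R * (γ * T) ^ (-(α + β)) := by ring
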